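/- For every positive integer i, with b(i,1,k) = ∑_{P(k,i+1)} 1/(l₁⋯l_k), one has b(i,1,i+1) = 1, ∑_{k=1}^{i+1} b(i,1,k)/k! = 1, and ∑_{k=1}^{i+1} (b(i,1,k)/k!)·2^k = i+2. -/

import Mathlib

open Finset Polynomial

/-- The set of `k`-tuples of positive integers summing to `n`. -/
def P (k n : ℕ) : Finset (Fin k → ℕ) :=
  (Finset.Nat.antidiagonalTuple k n).filter fun l => ∀ i, 0 < l i

/-- `∑_{(l₁,…,l_k)∈P(k,n)} 1/(l₁⋯l_k)`. -/
def S (k n : ℕ) : ℚ := ∑ l ∈ P k n, (∏ i, (l i : ℚ))⁻¹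

/-- `e_l(1,2,…,m)` : the l-th elementary symmetric polynomial evaluated at 1,…,m. -/
def esym (m l : ℕ) : ℚ := (((Finset.range m).val.map fun i => ((i : ℚ) + 1)).esymm l)

/-!
Splitting off one part of a composition and using the symmetry of `P` gives the recurrence
`(n + 1) S(k + 1, n + 1) = (k + 1) S(k, n) + n S(k + 1, n)`, that of `k! c(n, k) / n!` for the
unsigned Stirling numbers `c(n, k)` of the first kind. Hence `Gₙ(t) = ∑ₖ S(k, n) tᵏ / k!` satisfies
`(n + 1) Gₙ₊₁(t) = (t + n) Gₙ(t)` with `G₀ = 1`, i.e. `Gₙ(t) = t (t + 1) ⋯ (t + n - 1) / n!`, which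
is `1` at `t = 1` and `n + 1` at `t = 2`. The only composition of `n` into `n` parts is `1 + ⋯ + 1`.
-/

open scoped Nat

lemma mem_P {k n : ℕ} {l : Fin k → ℕ} : l ∈ P k n ↔ ∑ i, l i = n ∧ ∀ i, 0 < l i := by
  simp [P, Finset.Nat.mem_antidiagonalTuple]

lemma P_self (n : ℕ) : P n n = {fun _ => 1} := by
  ext l
  simp only [mem_P, mem_singleton]
  constructor
  · rintro ⟨hsum, hpos⟩
    have hle : ∀ i ∈ univ, 1 ≤ l i := fun i _ => hpos i
    have hsum' : ∑ _i : Fin n, 1 = ∑ i, l i := by simp [hsum]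
    funext i
    exact ((sum_eq_sum_iff_of_le hle).1 hsum' i (mem_univ i)).symm
  · rintro rfl
    simp

lemma P_eq_empty_of_lt {k n : ℕ} (h : n < k) : P k n = ∅ := by
  refine eq_empty_of_forall_notMem fun l hl => ?_
  obtain ⟨hsum, hpos⟩ := mem_P.1 hl
  have : k ≤ n :=
    calc k = ∑ _i : Fin k, 1 := by simp
      _ ≤ ∑ i, l i := sum_le_sum fun i _ => hpos i
      _ = n := hsum
  omega

lemma S_self (n : ℕ) : S n n = 1 := by
  simp [S, P_self]

lemma S_eq_zero_of_lt {k n : ℕ} (h : n < k) : S k n = 0 := by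
  simp [S, P_eq_empty_of_lt h]

lemma S_zero_succ (n : ℕ) : S 0 (n + 1) = 0 := by
  have : P 0 (n + 1) = ∅ := eq_empty_of_forall_notMem fun l hl => by simp [mem_P] at hl
  simp [S, this]

lemma natCast_mul_S_zero (n : ℕ) : (n : ℚ) * S 0 n = 0 := by
  cases n with
  | zero => simp
  | succ n => simp [S_zero_succ]

lemma sum_P_comp_perm {k n : ℕ} (σ : Equiv.Perm (Fin k)) (f : (Fin k → ℕ) → ℚ) :
    ∑ l ∈ P k n, f (l ∘ σ) = ∑ l ∈ P k n, f l := by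
  have hmem : ∀ (τ : Equiv.Perm (Fin k)) l, l ∈ P k n → l ∘ τ ∈ P k n := fun τ l hl => by
    obtain ⟨hsum, hpos⟩ := mem_P.1 hl
    exact mem_P.2 ⟨(Equiv.sum_comp τ l).trans hsum, fun i => hpos (τ i)⟩
  refine sum_nbij' (· ∘ σ) (· ∘ σ.symm) (hmem σ) (hmem σ.symm) ?_ ?_ fun _ _ => rfl
  · intro l _
    funext i
    simp
  · intro l _
    funext i
    simp

lemma sum_P_succ_tail (k n : ℕ) (g : (Fin k → ℕ) → ℚ) :
    ∑ l ∈ P (k + 1) n, g (Fin.tail l) = ∑ m ∈ range n, ∑ l ∈ P k m, g l := by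
  rw [sum_sigma']
  refine sum_nbij' (fun l => ⟨∑ i, Fin.tail l i, Fin.tail l⟩) (fun p => Fin.cons (n - p.1) p.2)
    ?_ ?_ ?_ ?_ fun _ _ => rfl
  · intro l hl
    obtain ⟨hsum, hpos⟩ := mem_P.1 hl
    rw [Fin.sum_univ_succ] at hsum
    have := hpos 0
    simp only [mem_sigma, mem_range]
    exact ⟨by simp only [Fin.tail]; omega, mem_P.2 ⟨rfl, fun i => hpos i.succ⟩⟩
  · rintro ⟨m, l⟩ hp
    simp only [mem_sigma, mem_range] at hp
    obtain ⟨hm, hl⟩ := hp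
    obtain ⟨hsum, hpos⟩ := mem_P.1 hl
    refine mem_P.2 ⟨?_, Fin.cases (by simp; omega) fun i => by simpa using hpos i⟩
    rw [Fin.sum_univ_succ]
    simp only [Fin.cons_zero, Fin.cons_succ, hsum]
    omega
  · intro l hl
    obtain ⟨hsum, -⟩ := mem_P.1 hl
    rw [Fin.sum_univ_succ] at hsum
    simp only [Fin.tail] at hsum ⊢
    rw [← hsum, Nat.add_sub_cancel, Fin.cons_self_tail]
  · rintro ⟨m, l⟩ hp
    simp only [mem_sigma, mem_range] at hp
    simp [(mem_P.1 hp.2).1]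

/-- Write `n = ∑ⱼ lⱼ`: by symmetry every coordinate `j` contributes as much as `j = 0`, and
`l₀ / ∏ lᵢ = 1 / ∏ (Fin.tail l)ᵢ`. -/
lemma natCast_mul_S_succ (k n : ℕ) :
    (n : ℚ) * S (k + 1) n = (k + 1) * ∑ m ∈ range n, S k m := by
  have hcoord : ∀ j : Fin (k + 1), ∑ l ∈ P (k + 1) n, (l j : ℚ) * (∏ i, (l i : ℚ))⁻¹
      = ∑ l ∈ P (k + 1) n, (l 0 : ℚ) * (∏ i, (l i : ℚ))⁻¹ := fun j => by
    rw [← sum_P_comp_perm (Equiv.swap 0 j)]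
    refine sum_congr rfl fun l _ => ?_
    simp [Equiv.prod_comp (Equiv.swap 0 j) fun i => (l i : ℚ)]
  have hhead : ∑ l ∈ P (k + 1) n, (l 0 : ℚ) * (∏ i, (l i : ℚ))⁻¹
      = ∑ l ∈ P (k + 1) n, (∏ i, (Fin.tail l i : ℚ))⁻¹ := by
    refine sum_congr rfl fun l hl => ?_
    have h0 : (l 0 : ℚ) ≠ 0 := by exact_mod_cast ((mem_P.1 hl).2 0).ne'
    rw [Fin.prod_univ_succ, mul_inv, ← mul_assoc, mul_inv_cancel₀ h0, one_mul]
    rfl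
  calc (n : ℚ) * S (k + 1) n
      = ∑ l ∈ P (k + 1) n, ∑ j, (l j : ℚ) * (∏ i, (l i : ℚ))⁻¹ := by
        rw [S, mul_sum]
        refine sum_congr rfl fun l hl => ?_
        rw [← sum_mul, ← (mem_P.1 hl).1]
        push_cast
        rfl
    _ = ∑ j : Fin (k + 1), ∑ l ∈ P (k + 1) n, (l 0 : ℚ) * (∏ i, (l i : ℚ))⁻¹ := by
        rw [sum_comm]
        exact sum_congr rfl fun j _ => hcoord j
    _ = (k + 1) * ∑ m ∈ range n, S k m := by
        rw [sum_const, card_univ, Fintype.card_fin, nsmul_eq_mul, hhead,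
          sum_P_succ_tail k n fun l => (∏ i, (l i : ℚ))⁻¹]
        push_cast
        rfl

lemma succ_mul_S_succ_succ (k n : ℕ) :
    ((n : ℚ) + 1) * S (k + 1) (n + 1) = (k + 1) * S k n + n * S (k + 1) n := by
  have h := natCast_mul_S_succ k (n + 1)
  rw [sum_range_succ] at h
  push_cast at h
  linear_combination h - natCast_mul_S_succ k n

lemma succ_mul_sum_S_succ_div_factorial_mul_pow (n : ℕ) (t : ℚ) :
    ((n : ℚ) + 1) * ∑ k ∈ range (n + 2), S k (n + 1) / k ! * t ^ k
      = (t + n) * ∑ k ∈ range (n + 1), S k n / k ! * t ^ k := by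
  have hterm : ∀ k, ((n : ℚ) + 1) * (S (k + 1) (n + 1) / (k + 1)! * t ^ (k + 1))
      = t * (S k n / k ! * t ^ k) + n * (S (k + 1) n / (k + 1)! * t ^ (k + 1)) := fun k => by
    have hk : (k ! : ℚ) ≠ 0 := by positivity
    rw [Nat.factorial_succ, Nat.cast_mul, Nat.cast_succ]
    field_simp
    linear_combination t ^ (k + 1) * succ_mul_S_succ_succ k n
  have hshift : ∑ k ∈ range (n + 1), S (k + 1) n / (k + 1)! * t ^ (k + 1)
      = ∑ k ∈ range (n + 1), S k n / k ! * t ^ k - S 0 n := by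
    rw [sum_range_succ, S_eq_zero_of_lt n.lt_succ_self, sum_range_succ' _ n]
    simp
  rw [sum_range_succ', S_zero_succ, mul_add, mul_sum, sum_congr rfl fun k _ => hterm k,
    sum_add_distrib, ← mul_sum, ← mul_sum, hshift]
  linear_combination (-1 : ℚ) * natCast_mul_S_zero n

theorem sum_S_div_factorial_mul_pow (n : ℕ) (t : ℚ) :
    ∑ k ∈ range (n + 1), S k n / k ! * t ^ k = (ascPochhammer ℚ n).eval t / n ! := by
  induction n with
  | zero => simp [S_self]
  | succ n ih =>
    have h := succ_mul_sum_S_succ_div_factorial_mul_pow n t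
    rw [ih] at h
    rw [ascPochhammer_succ_eval, Nat.factorial_succ, Nat.cast_mul, Nat.cast_succ]
    field_simp
    field_simp at h
    linear_combination h

lemma sum_Icc_S_div_factorial_mul_pow (n : ℕ) (t : ℚ) :
    ∑ k ∈ Icc 1 (n + 1), S k (n + 1) / k ! * t ^ k
      = (ascPochhammer ℚ (n + 1)).eval t / (n + 1)! := by
  rw [← sum_S_div_factorial_mul_pow]
  refine sum_subset (fun k hk => by rw [mem_Icc] at hk; rw [mem_range]; omega) fun k _ hk => ?_
  obtain rfl : k = 0 := by rw [mem_range] at *; rw [mem_Icc] at hk; omega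
  simp [S_zero_succ]

theorem stmt4_general (i : ℕ) :
    S (i + 1) (i + 1) = 1 ∧
    ∑ k ∈ Finset.Icc 1 (i + 1), S k (i + 1) / k.factorial = 1 ∧
    ∑ k ∈ Finset.Icc 1 (i + 1), S k (i + 1) / k.factorial * 2 ^ k = i + 2 := by
  refine ⟨S_self (i + 1), ?_, ?_⟩
  · have h := sum_Icc_S_div_factorial_mul_pow i 1
    rw [ascPochhammer_eval_one, div_self (by positivity)] at h
    simpa using h
  · have h : (ascPochhammer ℚ (i + 1)).eval 2 = (i + 2)! := by
      simpa [one_add_one_eq_two, add_comm 1 (i + 1)] using factorial_mul_ascPochhammer ℚ 1 (i + 1)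
    rw [sum_Icc_S_div_factorial_mul_pow, h, Nat.factorial_succ (i + 1)]
    push_cast
    field_simp
    ring

theorem stmt4 (i : ℕ) (hi : 0 < i) :
    S (i + 1) (i + 1) = 1 ∧
    ∑ k ∈ Finset.Icc 1 (i + 1), S k (i + 1) / k.factorial = 1 ∧
    ∑ k ∈ Finset.Icc 1 (i + 1), S k (i + 1) / k.factorial * 2 ^ k = i + 2 :=
  stmt4_general i
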